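/- arXiv:2209.08408 — 3 statements merged into one kernel-verified Lean document; each statement's English description precedes it below -/
import Mathlib

section
/- Every cycle C_n (n ≥ 3) is strongly antimagic. -/
open Finset

open scoped Classical

noncomputable section

variable {V : Type*} [Fintype V] [DecidableEq V]

/-- The finset of edges of a simple graph on a finite vertex type. -/
def edges (G : SimpleGraph V) : Finset (Sym2 V) :=
  Finset.univ.filter (fun e => e ∈ G.edgeSet)

/-- The vertex sum `φ_f(v)`: the sum of the labels of the edges incident to `v`. -/
def phi (G : SimpleGraph V) (f : Sym2 V → ℕ) (v : V) : ℕ :=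
  ∑ e ∈ (edges G).filter (fun e => v ∈ e), f e

/-- The degree of a vertex: the number of edges incident to it. -/
def deg (G : SimpleGraph V) (v : V) : ℕ :=
  ((edges G).filter (fun e => v ∈ e)).card

/-- `f` is a strongly antimagic labeling of `G`: a bijection from the edge set onto
`{1, …, m}` with pairwise distinct vertex sums, such that larger degree forces a
larger vertex sum. -/
def IsStronglyAntimagicLabeling (G : SimpleGraph V) (f : Sym2 V → ℕ) : Prop :=
  Set.BijOn f (edges G : Set (Sym2 V)) (Set.Icc 1 (edges G).card) ∧
  (∀ u v : V, u ≠ v → phi G f u ≠ phi G f v) ∧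
  (∀ u v : V, deg G v < deg G u → phi G f v < phi G f u)

/-- A graph is strongly antimagic if it admits a strongly antimagic labeling. -/
def IsStronglyAntimagic (G : SimpleGraph V) : Prop :=
  ∃ f : Sym2 V → ℕ, IsStronglyAntimagicLabeling G f

/-- The edge label: `k+1` in general, except the last two labels are swapped
when `n` is even. -/
def lbl (n k : ℕ) : ℕ :=
  if n % 2 = 0 ∧ k = n - 2 then n
  else if n % 2 = 0 ∧ k = n - 1 then n - 1
  else k + 1

lemma lbl_inj {n k l : ℕ} (hn : 3 ≤ n) (hk : k < n) (hl : l < n)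
    (h : lbl n k = lbl n l) : k = l := by
  unfold lbl at h; split_ifs at h <;> omega

lemma lbl_bounds {n k : ℕ} (hn : 3 ≤ n) (hk : k < n) :
    1 ≤ lbl n k ∧ lbl n k ≤ n := by
  unfold lbl; split_ifs <;> omega

lemma lbl_surj {n m : ℕ} (hn : 3 ≤ n) (h1 : 1 ≤ m) (h2 : m ≤ n) :
    ∃ k, k < n ∧ lbl n k = m := by
  by_cases he : n % 2 = 0
  · by_cases hm : m = n
    · exact ⟨n - 2, by omega, by unfold lbl; split_ifs <;> omega⟩
    · by_cases hm' : m = n - 1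
      · exact ⟨n - 1, by omega, by unfold lbl; split_ifs <;> omega⟩
      · exact ⟨m - 1, by omega, by unfold lbl; split_ifs <;> omega⟩
  · exact ⟨m - 1, by omega, by unfold lbl; split_ifs <;> omega⟩

set_option maxHeartbeats 2000000 in
lemma lbl_key {n k l : ℕ} (hn : 3 ≤ n) (hk : k < n) (hl : l < n)
    (h : lbl n (if k = 0 then n - 1 else k - 1) + lbl n k
       = lbl n (if l = 0 then n - 1 else l - 1) + lbl n l) : k = l := by
  rcases Nat.even_or_odd n with he | ho
  · have h2 : n % 2 = 0 := Nat.even_iff.mp he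
    unfold lbl at h
    simp only [h2, true_and] at h
    split_ifs at h <;> omega
  · have h2 : n % 2 = 1 := Nat.odd_iff.mp ho
    have h2' : ¬ (n % 2 = 0) := by omega
    unfold lbl at h
    simp only [h2', false_and, if_false] at h
    split_ifs at h <;> omega

/-- every cycle `C n` with `n ≥ 3` is strongly antimagic. -/
theorem stmt_10 (n : ℕ) (hn : 3 ≤ n) :
    IsStronglyAntimagic (SimpleGraph.cycleGraph n) := by
  haveI : NeZero n := ⟨by omega⟩
  have hv1 : (1 : Fin n).val = 1 := by
    rw [Fin.val_one']; exact Nat.mod_eq_of_lt (by omega)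
  have hadd : ∀ i : Fin n, (i + 1).val = if i.val = n - 1 then 0 else i.val + 1 := by
    intro i
    rw [Fin.add_def, hv1]
    split_ifs with h0
    · show (i.val + 1) % n = 0
      have : i.val + 1 = n := by omega
      rw [this, Nat.mod_self]
    · exact Nat.mod_eq_of_lt (by omega)
  have hsub : ∀ u : Fin n, (u - 1).val = if u.val = 0 then n - 1 else u.val - 1 := by
    intro u
    rw [Fin.sub_def, hv1]
    split_ifs with h0
    · simp only [h0, Nat.add_zero]
      exact Nat.mod_eq_of_lt (by omega)
    · have heq : (n - 1) + u.val = (u.val - 1) + n := by omega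
      show ((n - 1) + u.val) % n = u.val - 1
      rw [heq, Nat.add_mod_right, Nat.mod_eq_of_lt (by omega)]
  have hinj : ∀ i j : Fin n, s(i, i + 1) = s(j, j + 1) → i = j := by
    intro i j h
    rw [Sym2.eq_iff] at h
    rcases h with ⟨h1, _⟩ | ⟨h1, h2⟩
    · exact h1
    · exfalso
      have a : i.val = (j + 1).val := by rw [h1]
      have b : (i + 1).val = j.val := by rw [h2]
      rw [hadd] at a b
      have hi := i.isLt
      have hj := j.isLt
      split_ifs at a b <;> omega
  have hedges : ∀ e, e ∈ edges (SimpleGraph.cycleGraph n) ↔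
      ∃ i : Fin n, e = s(i, i + 1) := by
    intro e
    simp only [edges, Finset.mem_filter, Finset.mem_univ, true_and]
    induction e using Sym2.ind with
    | _ a b =>
      rw [SimpleGraph.mem_edgeSet, SimpleGraph.cycleGraph_adj']
      constructor
      · rintro (h | h)
        · have hab : a - b = 1 := Fin.ext (by rw [hv1]; exact h)
          have : a = b + 1 := by
            rw [sub_eq_iff_eq_add] at hab; rw [hab, add_comm]
          exact ⟨b, by rw [this, Sym2.eq_swap]⟩
        · have hab : b - a = 1 := Fin.ext (by rw [hv1]; exact h)
          have : b = a + 1 := by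
            rw [sub_eq_iff_eq_add] at hab; rw [hab, add_comm]
          exact ⟨a, by rw [this]⟩
      · rintro ⟨i, hi⟩
        rw [Sym2.eq_iff] at hi
        rcases hi with ⟨rfl, rfl⟩ | ⟨rfl, rfl⟩
        · right; rw [add_sub_cancel_left, hv1]
        · left; rw [add_sub_cancel_left, hv1]
  set f : Sym2 (Fin n) → ℕ :=
    fun e => ∑ i : Fin n, if e = s(i, i + 1) then lbl n i.val else 0 with hfdef
  have hf : ∀ i : Fin n, f s(i, i + 1) = lbl n i.val := by
    intro i
    simp only [hfdef]
    rw [Finset.sum_eq_single i]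
    · rw [if_pos rfl]
    · intro j _ hj
      rw [if_neg]
      intro hc
      exact hj (hinj i j hc).symm
    · intro h; exact absurd (Finset.mem_univ i) h
  have hpairne : ∀ v : Fin n, s(v - 1, v) ≠ s(v, v + 1) := by
    intro v h
    rw [Sym2.eq_iff] at h
    have hv := v.isLt
    rcases h with ⟨h1, _⟩ | ⟨h1, _⟩
    · have := congrArg Fin.val h1
      rw [hsub] at this
      split_ifs at this <;> omega
    · have := congrArg Fin.val h1
      rw [hsub, hadd] at this
      split_ifs at this <;> omega
  have hsvv : ∀ v : Fin n, s(v - 1, v) = s(v - 1, (v - 1) + 1) := by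
    intro v; rw [sub_add_cancel]
  have hfilter : ∀ v : Fin n,
      (edges (SimpleGraph.cycleGraph n)).filter (fun e => v ∈ e)
        = {s(v - 1, v), s(v, v + 1)} := by
    intro v
    ext e
    simp only [Finset.mem_filter, hedges, Finset.mem_insert, Finset.mem_singleton]
    constructor
    · rintro ⟨⟨i, rfl⟩, hv⟩
      rw [Sym2.mem_iff] at hv
      rcases hv with rfl | rfl
      · right; rfl
      · left
        have : i + 1 - 1 = i := by rw [add_sub_cancel_right]
        rw [this]
    · rintro (rfl | rfl)
      · exact ⟨⟨v - 1, hsvv v⟩, by rw [Sym2.mem_iff]; right; rfl⟩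
      · exact ⟨⟨v, rfl⟩, by rw [Sym2.mem_iff]; left; rfl⟩
  have hphi : ∀ v : Fin n, phi (SimpleGraph.cycleGraph n) f v
      = lbl n (v - 1).val + lbl n v.val := by
    intro v
    rw [phi, hfilter v, Finset.sum_pair (hpairne v), hsvv v, hf, hf]
  have hdeg : ∀ v : Fin n, deg (SimpleGraph.cycleGraph n) v = 2 := by
    intro v
    rw [deg, hfilter v,
      Finset.card_insert_of_notMem (by
        simp only [Finset.mem_singleton]; exact hpairne v),
      Finset.card_singleton]
  have hcard : (edges (SimpleGraph.cycleGraph n)).card = n := by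
    have himg : edges (SimpleGraph.cycleGraph n)
        = Finset.univ.image (fun i : Fin n => s(i, i + 1)) := by
      ext e
      rw [hedges, Finset.mem_image]
      simp only [Finset.mem_univ, true_and]
      exact ⟨fun ⟨i, hi⟩ => ⟨i, hi.symm⟩, fun ⟨i, hi⟩ => ⟨i, hi.symm⟩⟩
    rw [himg, Finset.card_image_of_injective _ (fun i j h => hinj i j h),
      Finset.card_univ, Fintype.card_fin]
  refine ⟨f, ⟨?_, ?_, ?_⟩⟩
  · rw [hcard]
    refine ⟨?_, ?_, ?_⟩
    · intro e he
      rw [Finset.mem_coe, hedges] at he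
      obtain ⟨i, rfl⟩ := he
      rw [hf]
      have := lbl_bounds hn i.isLt
      exact Set.mem_Icc.mpr ⟨this.1, this.2⟩
    · intro e1 h1 e2 h2 hfe
      rw [Finset.mem_coe, hedges] at h1 h2
      obtain ⟨i, rfl⟩ := h1
      obtain ⟨j, rfl⟩ := h2
      rw [hf, hf] at hfe
      have : i = j := Fin.ext (lbl_inj hn i.isLt j.isLt hfe)
      rw [this]
    · intro m hm
      rw [Set.mem_Icc] at hm
      obtain ⟨k, hk, hlk⟩ := lbl_surj hn hm.1 hm.2
      refine ⟨s((⟨k, hk⟩ : Fin n), (⟨k, hk⟩ : Fin n) + 1), ?_, ?_⟩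
      · exact Finset.mem_coe.mpr ((hedges _).mpr ⟨_, rfl⟩)
      · rw [hf]; exact hlk
  · intro u v huv hcontra
    apply huv
    apply Fin.ext
    rw [hphi, hphi, hsub, hsub] at hcontra
    exact lbl_key hn u.isLt v.isLt hcontra
  · intro u v h
    rw [hdeg, hdeg] at h
    exact absurd h (lt_irrefl 2)
end
end

section
/- Let S(u,v) be a double spider with deg(u) = deg(v) = 3 in which u is adjacent to two leaves via pendant edges e', e'', v is adjacent to one leaf via pendant edge q, and the remaining graph is a path u = w_0, w_1, ..., w_k with v = w_t for some 1 ≤ t ≤ k−2. If k is even and t > k/2, then the labeling obtained by assigning labels 1, 2, ..., k+3 in the edge order (e_2, e_4, ..., e_k, e', e'', q, e_1, e_3, ..., e_{k-1}) (where e_i = w_{i-1} w_i) is strongly antimagic; in particular φ(w_i) = k/2 + i + 4 for i ∈ {1,...,k−1}\{t}, φ(v) = k + t + 7, and φ(u) = 3k/2 + 7. -/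
open Finset

open scoped Classical

noncomputable section

variable {V : Type*} [Fintype V] [DecidableEq V]

/-- The double spider of STATEMENT 15: a path `w_0, …, w_k` (vertices `Sum.inl i`),
two pendant edges `e' = w_0 (inr 0)`, `e'' = w_0 (inr 1)` at `u = w_0`, and one pendant
edge `q = w_t (inr 2)` at `v = w_t`. -/
def dblSpiderA (k t : ℕ) : SimpleGraph (Fin (k + 1) ⊕ Fin 3) :=
  SimpleGraph.fromEdgeSet (
    {e | ∃ i j : Fin (k + 1), (j : ℕ) = (i : ℕ) + 1 ∧ e = s(Sum.inl i, Sum.inl j)}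
    ∪ {e | ∃ i : Fin (k + 1), (i : ℕ) = 0 ∧
        (e = s(Sum.inl i, Sum.inr 0) ∨ e = s(Sum.inl i, Sum.inr 1))}
    ∪ {e | ∃ i : Fin (k + 1), (i : ℕ) = t ∧ e = s(Sum.inl i, Sum.inr 2)})

/-- The smaller 0-indexed path endpoint of an edge (junk value `0` on `inr`). -/
def minIdxA {k : ℕ} : Sym2 (Fin (k + 1) ⊕ Fin 3) → ℕ :=
  Sym2.lift ⟨fun a b =>
      min (Sum.elim (fun i : Fin (k + 1) => (i : ℕ)) (fun _ => 0) a)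
        (Sum.elim (fun i : Fin (k + 1) => (i : ℕ)) (fun _ => 0) b),
    fun a b => min_comm _ _⟩

/-- The labeling of STATEMENT 15: labels `1, …, k+3` in the order
`(e_2, e_4, …, e_k, e', e'', q, e_1, e_3, …, e_{k-1})` (for `k` even). -/
def labA (k : ℕ) : Sym2 (Fin (k + 1) ⊕ Fin 3) → ℕ := fun e =>
  if (Sum.inr 0 : Fin (k + 1) ⊕ Fin 3) ∈ e then k / 2 + 1
  else if (Sum.inr 1 : Fin (k + 1) ⊕ Fin 3) ∈ e then k / 2 + 2
  else if (Sum.inr 2 : Fin (k + 1) ⊕ Fin 3) ∈ e then k / 2 + 3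
  else if (minIdxA e + 1) % 2 = 0 then (minIdxA e + 1) / 2
  else k / 2 + 4 + (minIdxA e + 1 - 1) / 2

/-!
The path edges alternate between small and large labels: `e_2, e_4, …, e_k` get `1, …, k/2`
and `e_1, e_3, …, e_{k-1}` get `k/2 + 4, …, k + 3`, so every inner path vertex `w_i` sees one
of each and its vertex sum `k/2 + 4 + i` grows by one along the path. The four leaves get the
sums `k/2, …, k/2 + 3`, below all these, while the two branch vertices get `3k/2 + 7` and
`k + t + 7`, above the largest inner sum `3k/2 + 3` and distinct because `t > k/2`.
-/

section DoubleSpider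

variable {k t : ℕ}

/-- The edges of `dblSpiderA k t`, indexed by `Fin k ⊕ Fin 3`: `inl i` is the path edge
`e_{i+1} = w_i w_{i+1}`, and `inr c` is the pendant edge at the leaf `inr c`, attached to
`w_t` for `c = 2` and to `w_0` otherwise. -/
def spiderEdge (k t : ℕ) : Fin k ⊕ Fin 3 → Sym2 (Fin (k + 1) ⊕ Fin 3)
  | .inl i => s(.inl i.castSucc, .inl i.succ)
  | .inr c => s(.inl (Fin.ofNat (k + 1) (if c = 2 then t else 0)), .inr c)

lemma spiderEdge_injective : Function.Injective (spiderEdge k t) := by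
  rintro (i | c) (j | d) h <;> simp [spiderEdge, Fin.ext_iff] at h ⊢ <;> omega

lemma edgeSet_dblSpiderA (ht : t < k + 1) :
    (dblSpiderA k t).edgeSet = Set.range (spiderEdge k t) := by
  ext e
  simp only [dblSpiderA, SimpleGraph.edgeSet_fromEdgeSet, Set.mem_sdiff, Set.mem_union,
    Set.mem_range]
  constructor
  · rintro ⟨(⟨i, j, hij, rfl⟩ | ⟨i, hi0, rfl | rfl⟩) | ⟨i, hit, rfl⟩, -⟩
    · exact ⟨.inl ⟨i, by omega⟩, by simp [spiderEdge, Fin.ext_iff, hij]⟩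
    · exact ⟨.inr 0, by simp [spiderEdge, Fin.ext_iff, hi0]⟩
    · exact ⟨.inr 1, by simp [spiderEdge, Fin.ext_iff, hi0]⟩
    · exact ⟨.inr 2, by simp [spiderEdge, Fin.ext_iff, hit, Nat.mod_eq_of_lt ht]⟩
  · rintro ⟨i | c, rfl⟩
    · exact ⟨.inl (.inl ⟨_, _, rfl, rfl⟩), by simp [spiderEdge, Fin.ext_iff]⟩
    · refine ⟨?_, by simp [spiderEdge]⟩
      fin_cases c
      · exact .inl (.inr ⟨_, rfl, .inl rfl⟩)
      · exact .inl (.inr ⟨_, rfl, .inr rfl⟩)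
      · exact .inr ⟨_, by simp [Nat.mod_eq_of_lt ht], rfl⟩

lemma edges_dblSpiderA (ht : t < k + 1) :
    edges (dblSpiderA k t) = univ.image (spiderEdge k t) := by
  ext e
  simp [edges, edgeSet_dblSpiderA ht]

lemma sum_range_ite_adjacent {M : Type*} [AddCommMonoid M] (g : ℕ → M) (j k : ℕ) :
    ∑ i ∈ range k, (if j = i ∨ j = i + 1 then g i else 0) =
      (if j < k then g j else 0) + (if 0 < j ∧ j ≤ k then g (j - 1) else 0) := by
  have hsplit : ∀ i, (if j = i ∨ j = i + 1 then g i else 0) =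
      (if j = i then g i else 0) + (if j = i + 1 then g i else 0) := by
    intro i
    by_cases h : j = i <;> by_cases h' : j = i + 1 <;> simp [h, h']
  rw [sum_congr rfl fun i _ => hsplit i, sum_add_distrib, sum_ite_eq]
  cases j with
  | zero => simp
  | succ j => simp

lemma deg_eq_phi_one (G : SimpleGraph V) (v : V) :
    deg G v = phi G (fun _ => 1) v :=
  card_eq_sum_ones _

lemma phi_dblSpiderA (ht : t < k + 1) (f : Sym2 (Fin (k + 1) ⊕ Fin 3) → ℕ)
    (v : Fin (k + 1) ⊕ Fin 3) :
    phi (dblSpiderA k t) f v =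
      ∑ x, if v ∈ spiderEdge k t x then f (spiderEdge k t x) else 0 := by
  rw [phi, sum_filter, edges_dblSpiderA ht, sum_image spiderEdge_injective.injOn]

lemma inl_mem_spiderEdge_inl {j : Fin (k + 1)} {i : Fin k} :
    .inl j ∈ spiderEdge k t (.inl i) ↔ (j : ℕ) = i ∨ (j : ℕ) = i + 1 := by
  simp [spiderEdge, Fin.ext_iff]

lemma inl_mem_spiderEdge_inr (ht : t < k + 1) {j : Fin (k + 1)} {c : Fin 3} :
    .inl j ∈ spiderEdge k t (.inr c) ↔ (j : ℕ) = if c = 2 then t else 0 := by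
  simp only [spiderEdge, Sym2.mem_iff, Sum.inl.injEq, reduceCtorEq, or_false, Fin.ext_iff,
    Fin.val_ofNat]
  split_ifs <;> simp [Nat.mod_eq_of_lt ht]

lemma inr_mem_spiderEdge {c : Fin 3} {x : Fin k ⊕ Fin 3} :
    .inr c ∈ spiderEdge k t x ↔ x = .inr c := by
  cases x <;> simp [spiderEdge, eq_comm]

lemma phi_dblSpiderA_inl (ht : t < k + 1) (f : Sym2 (Fin (k + 1) ⊕ Fin 3) → ℕ)
    (g : ℕ → ℕ) (hg : ∀ i : Fin k, f (spiderEdge k t (.inl i)) = g i) (j : Fin (k + 1)) :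
    phi (dblSpiderA k t) f (.inl j) =
      (if (j : ℕ) < k then g j else 0) + (if 0 < (j : ℕ) then g (j - 1) else 0) +
      (if (j : ℕ) = 0 then f (spiderEdge k t (.inr 0)) + f (spiderEdge k t (.inr 1)) else 0) +
      (if (j : ℕ) = t then f (spiderEdge k t (.inr 2)) else 0) := by
  rw [phi_dblSpiderA ht, Fintype.sum_sum_type, Fin.sum_univ_three]
  simp only [inl_mem_spiderEdge_inl, inl_mem_spiderEdge_inr ht, hg]
  rw [Fin.sum_univ_eq_sum_range (fun i => if (j : ℕ) = i ∨ (j : ℕ) = i + 1 then g i else 0),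
    sum_range_ite_adjacent]
  have := j.isLt
  simp only [Fin.reduceEq, if_true, if_false]
  split_ifs <;> omega

lemma phi_dblSpiderA_inr (ht : t < k + 1) (f : Sym2 (Fin (k + 1) ⊕ Fin 3) → ℕ) (c : Fin 3) :
    phi (dblSpiderA k t) f (.inr c) = f (spiderEdge k t (.inr c)) := by
  simp only [phi_dblSpiderA ht, inr_mem_spiderEdge, Fintype.sum_ite_eq']

lemma deg_dblSpiderA_inl (ht0 : 0 < t) (htk : t < k) (j : Fin (k + 1)) :
    deg (dblSpiderA k t) (.inl j) =
      if (j : ℕ) = 0 ∨ (j : ℕ) = t then 3 else if (j : ℕ) = k then 1 else 2 := by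
  rw [deg_eq_phi_one, phi_dblSpiderA_inl (by omega) _ (fun _ => 1) fun _ => rfl]
  have := j.isLt
  split_ifs <;> omega

lemma deg_dblSpiderA_inr (ht : t < k + 1) (c : Fin 3) : deg (dblSpiderA k t) (.inr c) = 1 := by
  rw [deg_eq_phi_one, phi_dblSpiderA_inr ht]

def pathLabel (k i : ℕ) : ℕ :=
  if (i + 1) % 2 = 0 then (i + 1) / 2 else k / 2 + 4 + i / 2

lemma labA_spiderEdge_inl (i : Fin k) : labA k (spiderEdge k t (.inl i)) = pathLabel k i := by
  simp [labA, spiderEdge, minIdxA, pathLabel]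

lemma labA_spiderEdge_inr (c : Fin 3) : labA k (spiderEdge k t (.inr c)) = k / 2 + 1 + c := by
  fin_cases c <;> simp [labA, spiderEdge]

lemma phi_labA_inl (hke : k % 2 = 0) (ht0 : 0 < t) (htk : t < k) (j : Fin (k + 1)) :
    phi (dblSpiderA k t) (labA k) (.inl j) =
      if (j : ℕ) = 0 then k + k / 2 + 7 else if (j : ℕ) = t then k + t + 7
      else if (j : ℕ) = k then k / 2 else k / 2 + 4 + j := by
  rw [phi_dblSpiderA_inl (by omega) _ (pathLabel k) labA_spiderEdge_inl]
  simp only [labA_spiderEdge_inr, pathLabel]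
  have := j.isLt
  split_ifs <;> simp <;> omega

lemma phi_labA_inr (ht : t < k + 1) (c : Fin 3) :
    phi (dblSpiderA k t) (labA k) (.inr c) = k / 2 + 1 + c := by
  rw [phi_dblSpiderA_inr ht, labA_spiderEdge_inr]

lemma bijOn_labA_comp_spiderEdge :
    Set.BijOn (labA k ∘ spiderEdge k t) Set.univ (Set.Icc 1 (k + 3)) := by
  have hmaps : Set.MapsTo (labA k ∘ spiderEdge k t) Set.univ (Set.Icc 1 (k + 3)) := by
    rintro (i | c) -
    · have := i.isLt
      simp only [Function.comp_apply, labA_spiderEdge_inl, pathLabel, Set.mem_Icc]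
      split_ifs <;> omega
    · have := c.isLt
      simp only [Function.comp_apply, labA_spiderEdge_inr, Set.mem_Icc]
      omega
  have hinj : Function.Injective (labA k ∘ spiderEdge k t) := by
    rintro (i | c) (j | d) h <;>
      simp only [Function.comp_apply, labA_spiderEdge_inl, labA_spiderEdge_inr, pathLabel,
        Sum.inl.injEq, Sum.inr.injEq, reduceCtorEq, Fin.ext_iff] at h ⊢
    · have := i.isLt; have := j.isLt
      split_ifs at h <;> omega
    · have := i.isLt
      split_ifs at h <;> omega
    · have := j.isLt
      split_ifs at h <;> omega
    · omega
  refine ⟨hmaps, hinj.injOn, ?_⟩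
  simpa using surjOn_of_injOn_of_card_le (s := univ) (t := Icc 1 (k + 3)) _
    (by simpa using hmaps) (by simpa using hinj) (by simp)

lemma bijOn_labA_dblSpiderA (ht : t < k + 1) :
    Set.BijOn (labA k) (edges (dblSpiderA k t)) (Set.Icc 1 (edges (dblSpiderA k t)).card) := by
  rw [edges_dblSpiderA ht, card_image_of_injective _ spiderEdge_injective, card_univ,
    Fintype.card_sum, Fintype.card_fin, Fintype.card_fin, coe_image, coe_univ,
    ← Set.bijOn_comp_iff spiderEdge_injective.injOn]
  exact bijOn_labA_comp_spiderEdge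

lemma phi_labA_injective (hke : k % 2 = 0) (hkt : k / 2 < t) (htk : t < k) :
    Function.Injective (phi (dblSpiderA k t) (labA k)) := by
  rintro (i | c) (j | d) h <;>
    simp only [phi_labA_inl hke (by omega) htk, phi_labA_inr (by omega : t < k + 1),
      Sum.inl.injEq, Sum.inr.injEq, reduceCtorEq, Fin.ext_iff] at h ⊢
  · have := i.isLt; have := j.isLt
    split_ifs at h <;> omega
  · have := d.isLt
    split_ifs at h <;> omega
  · have := c.isLt
    split_ifs at h <;> omega
  · omega

lemma phi_labA_lt_of_deg_lt (hke : k % 2 = 0) (hkt : k / 2 < t) (htk : t < k)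
    {u v : Fin (k + 1) ⊕ Fin 3} (h : deg (dblSpiderA k t) v < deg (dblSpiderA k t) u) :
    phi (dblSpiderA k t) (labA k) v < phi (dblSpiderA k t) (labA k) u := by
  rcases u with i | c <;> rcases v with j | d <;>
    simp only [deg_dblSpiderA_inl (by omega) htk, deg_dblSpiderA_inr (by omega : t < k + 1),
      phi_labA_inl hke (by omega) htk, phi_labA_inr (by omega : t < k + 1)] at h ⊢
  · have := i.isLt; have := j.isLt
    split_ifs at h ⊢ <;> omega
  · split_ifs at h ⊢ <;> omega
  · split_ifs at h ⊢ <;> omega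
  · omega

end DoubleSpider

theorem stmt_15_general (k t : ℕ) (hke : k % 2 = 0) (ht2 : t ≤ k - 2)
    (htk : k / 2 < t) :
    IsStronglyAntimagicLabeling (dblSpiderA k t) (labA k) ∧
    (∀ i : Fin (k + 1), 1 ≤ (i : ℕ) → (i : ℕ) ≤ k - 1 → (i : ℕ) ≠ t →
      phi (dblSpiderA k t) (labA k) (Sum.inl i) = k / 2 + (i : ℕ) + 4) ∧
    (∀ i : Fin (k + 1), (i : ℕ) = t →
      phi (dblSpiderA k t) (labA k) (Sum.inl i) = k + t + 7) ∧
    (∀ i : Fin (k + 1), (i : ℕ) = 0 →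
      phi (dblSpiderA k t) (labA k) (Sum.inl i) = k + k / 2 + 7) := by
  have hlt : t < k := by omega
  have hphi := phi_labA_inl hke (by omega) hlt
  refine ⟨⟨bijOn_labA_dblSpiderA (by omega), fun _ _ => (phi_labA_injective hke htk hlt).ne,
    fun _ _ => phi_labA_lt_of_deg_lt hke htk hlt⟩,
    fun i _ _ _ => ?_, fun i _ => ?_, fun i _ => ?_⟩ <;>
  · rw [hphi]
    split_ifs <;> omega

/-- for `k` even and `k/2 < t ≤ k - 2`, the explicit labeling of the
double spider is strongly antimagic, with the stated vertex sums
`φ(w_i) = k/2 + i + 4` (for `1 ≤ i ≤ k-1`, `i ≠ t`), `φ(v) = k + t + 7`, and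
`φ(u) = 3k/2 + 7`. -/
theorem stmt_15 (k t : ℕ) (hke : k % 2 = 0) (ht1 : 1 ≤ t) (ht2 : t ≤ k - 2)
    (htk : k / 2 < t) :
    IsStronglyAntimagicLabeling (dblSpiderA k t) (labA k) ∧
    (∀ i : Fin (k + 1), 1 ≤ (i : ℕ) → (i : ℕ) ≤ k - 1 → (i : ℕ) ≠ t →
      phi (dblSpiderA k t) (labA k) (Sum.inl i) = k / 2 + (i : ℕ) + 4) ∧
    (∀ i : Fin (k + 1), (i : ℕ) = t →
      phi (dblSpiderA k t) (labA k) (Sum.inl i) = k + t + 7) ∧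
    (∀ i : Fin (k + 1), (i : ℕ) = 0 →
      phi (dblSpiderA k t) (labA k) (Sum.inl i) = k + k / 2 + 7) :=
  stmt_15_general k t hke ht2 htk
end
end

section
/- Every cycle spider is strongly antimagic, where a cycle spider is obtained from a spider by replacing each leg (path from the center to a leaf) by a cycle through the center of the same length plus one; equivalently, a cycle spider is a connected graph consisting of at least three cycles that pairwise intersect in exactly one common vertex. -/
open Finset

open scoped Classical

noncomputable section

variable {V : Type*} [Fintype V] [DecidableEq V]

/-- A cycle spider: `r` cycles, the `i`-th of length `ℓ i`, all passing through the
common center `none` and otherwise disjoint. -/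
def cycleSpider (r : ℕ) (l : Fin r → ℕ) :
    SimpleGraph (Option (Σ i : Fin r, Fin (l i - 1))) :=
  SimpleGraph.fromEdgeSet (
    {e | ∃ (i : Fin r) (j : Fin (l i - 1)), ((j : ℕ) = 0 ∨ (j : ℕ) = l i - 2) ∧
        e = s(none, some ⟨i, j⟩)}
    ∪ {e | ∃ (i : Fin r) (j j' : Fin (l i - 1)), (j' : ℕ) = (j : ℕ) + 1 ∧
        e = s(some ⟨i, j⟩, some ⟨i, j'⟩)})

/-!
Walk around each cycle and give its edges consecutive labels, the cycles taking consecutive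
blocks of `{1, …, m}`. If the block of a cycle starts after `a`, its `j`-th inner vertex sees the
labels `a + j + 1` and `a + j + 2`: these sums `2a + 2j + 3` are pairwise distinct and at most
`2m - 1`. The center sees the first and the last label of every block; the first block alone
contributes its length plus one and the last block `2m` minus its length plus one, so once the
longest cycle is labelled first the center sum exceeds `2m`, above every other vertex sum.
-/

-- Written in the form of `finSigmaFinEquiv_apply`.
def blockStart {r : ℕ} (n : Fin r → ℕ) (p : Fin r) : ℕ :=
  ∑ i : Fin p, n (Fin.castLE p.2.le i)

theorem blockStart_zero {k : ℕ} (n : Fin (k + 1) → ℕ) : blockStart n 0 = 0 := by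
  simp [blockStart]

theorem blockStart_last_add {k : ℕ} (n : Fin (k + 1) → ℕ) :
    blockStart n (Fin.last k) + n (Fin.last k) = ∑ p, n p := by
  rw [Fin.sum_univ_castSucc]
  rfl

theorem two_mul_sum_le_sum_blockStart {k : ℕ} (n : Fin (k + 2) → ℕ)
    (hn : n (Fin.last (k + 1)) ≤ n 0 + 2) :
    2 * ∑ p, n p ≤ ∑ p, (2 * blockStart n p + n p + 1) := by
  have hpair := sum_le_sum_of_subset (f := fun p => 2 * blockStart n p + n p + 1)
    (subset_univ {0, Fin.last (k + 1)})
  rw [sum_pair (Fin.last_pos.ne : (0 : Fin (k + 2)) ≠ Fin.last (k + 1))] at hpair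
  have h0 : blockStart n 0 = 0 := blockStart_zero n
  have hlast : blockStart n (Fin.last (k + 1)) + n (Fin.last (k + 1)) = ∑ p, n p :=
    blockStart_last_add n
  omega

theorem exists_blockEnumeration {r : ℕ} (hr : 2 ≤ r) (l : Fin r → ℕ) :
    ∃ (a : Fin r → ℕ) (N : (Σ i, Fin (l i)) ≃ Fin (∑ i, l i)),
      (∀ x, (N x : ℕ) = a x.1 + x.2) ∧ 2 * ∑ i, l i ≤ ∑ i, (2 * a i + l i + 1) := by
  obtain ⟨k, rfl⟩ : ∃ k, r = k + 2 := ⟨r - 2, by omega⟩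
  obtain ⟨i₀, hi₀⟩ := Finite.exists_max l
  set σ := Equiv.swap 0 i₀
  have hsum : ∑ p, l (σ.symm p) = ∑ i, l i := Equiv.sum_comp σ.symm l
  refine ⟨fun i => blockStart (l ∘ σ.symm) (σ i),
    (Equiv.sigmaCongrLeft σ.symm).symm.trans (finSigmaFinEquiv.trans (finCongr hsum)), ?_, ?_⟩
  · rintro ⟨i, t⟩
    obtain ⟨p, rfl⟩ := σ.symm.surjective i
    have hx : (⟨σ.symm p, t⟩ : Σ i, Fin (l i)) = Equiv.sigmaCongrLeft σ.symm ⟨p, t⟩ := rfl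
    rw [hx, Equiv.trans_apply, Equiv.symm_apply_apply, Equiv.trans_apply, finCongr_apply,
      Fin.val_cast, finSigmaFinEquiv_apply]
    simp only [Equiv.sigmaCongrLeft_apply, Equiv.apply_symm_apply]
    rfl
  · have hblocks := two_mul_sum_le_sum_blockStart (l ∘ σ.symm)
      (by simpa [σ] using le_add_right (hi₀ _))
    rw [← hsum, ← Equiv.sum_comp σ.symm (fun i => 2 * blockStart (l ∘ σ.symm) (σ i) + l i + 1)]
    simpa using hblocks

section EdgeEnumeration

variable {ι : Type*} [Fintype ι] {G : SimpleGraph V} {E : ι → Sym2 V}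

theorem edges_eq_image (hE : Set.range E = G.edgeSet) : edges G = univ.image E := by
  ext e
  simp [edges, ← hE, eq_comm]

theorem card_edges_eq (hinj : E.Injective) (hE : Set.range E = G.edgeSet) :
    (edges G).card = Fintype.card ι := by
  rw [edges_eq_image hE, card_image_of_injective _ hinj, card_univ]

theorem phi_extend (hinj : E.Injective) (hE : Set.range E = G.edgeSet) (g : ι → ℕ) (v : V) :
    phi G (Function.extend E g 0) v = ∑ x ∈ univ.filter (fun x => v ∈ E x), g x := by
  rw [phi, edges_eq_image hE, filter_image, sum_image hinj.injOn]
  exact sum_congr rfl fun x _ => hinj.extend_apply g 0 x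

theorem deg_eq_card_filter (hinj : E.Injective) (hE : Set.range E = G.edgeSet) (v : V) :
    deg G v = (univ.filter (fun x => v ∈ E x)).card := by
  rw [deg, edges_eq_image hE, filter_image, card_image_of_injective _ hinj]

theorem bijOn_extend (hinj : E.Injective) (hE : Set.range E = G.edgeSet) {n : ℕ}
    (N : ι ≃ Fin n) :
    Set.BijOn (Function.extend E (fun x => (N x : ℕ) + 1) 0) (edges G) (Set.Icc 1 n) := by
  rw [edges_eq_image hE, coe_image, coe_univ, Set.image_univ]
  refine ⟨?_, ?_, ?_⟩
  · rintro _ ⟨x, rfl⟩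
    rw [hinj.extend_apply]
    exact ⟨by omega, N x |>.2⟩
  · rintro _ ⟨x, rfl⟩ _ ⟨y, rfl⟩ h
    rw [hinj.extend_apply, hinj.extend_apply, add_left_inj, Fin.val_inj, N.apply_eq_iff_eq] at h
    rw [h]
  · rintro y ⟨hy1, hy2⟩
    refine ⟨E (N.symm ⟨y - 1, by omega⟩), ⟨_, rfl⟩, ?_⟩
    rw [hinj.extend_apply, Equiv.apply_symm_apply, Fin.val_mk]
    omega

end EdgeEnumeration

theorem Fin.sigma_ext_iff {ι : Type*} {n : ι → ℕ} {x y : Σ i, Fin (n i)} :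
    x = y ↔ x.1 = y.1 ∧ (x.2 : ℕ) = y.2 := by
  obtain ⟨i, s⟩ := x
  obtain ⟨j, t⟩ := y
  constructor
  · rintro ⟨⟩
    exact ⟨rfl, rfl⟩
  · rintro ⟨h1, h2⟩
    dsimp only at h1 h2
    subst h1
    rw [Fin.ext h2]

namespace cycleSpider

variable {r : ℕ} {l : Fin r → ℕ}

/-- The `k`-th vertex on the `i`-th cycle, `0 ≤ k ≤ l i`: both `k = 0` and `k = l i` are the
center `none`, and the inner vertex `k` is `some ⟨i, k - 1⟩`. -/
def vertex (l : Fin r → ℕ) (i : Fin r) (k : ℕ) : Option (Σ i, Fin (l i - 1)) :=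
  if h : 0 < k ∧ k < l i then some ⟨i, ⟨k - 1, by omega⟩⟩ else none

def edge (l : Fin r → ℕ) (x : Σ i, Fin (l i)) : Sym2 (Option (Σ i, Fin (l i - 1))) :=
  s(vertex l x.1 x.2, vertex l x.1 (x.2 + 1))

theorem vertex_eq_none_iff {i : Fin r} {k : ℕ} : vertex l i k = none ↔ k = 0 ∨ l i ≤ k := by
  rw [vertex]
  split_ifs with h
  · simp only [false_iff]
    omega
  · simp only [true_iff]
    omega

theorem vertex_eq_some_iff {i i' : Fin r} {k : ℕ} {j : Fin (l i' - 1)} :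
    vertex l i k = some ⟨i', j⟩ ↔ i = i' ∧ k = j + 1 := by
  rw [vertex]
  split_ifs with h
  · rw [Option.some_inj, Fin.sigma_ext_iff]
    dsimp only
    omega
  · simp only [false_iff, not_and]
    rintro rfl rfl
    omega

theorem none_mem_edge_iff (x : Σ i, Fin (l i)) :
    none ∈ edge l x ↔ (x.2 : ℕ) = 0 ∨ (x.2 : ℕ) + 1 = l x.1 := by
  have := x.2.2
  simp only [edge, Sym2.mem_iff, eq_comm (a := none), vertex_eq_none_iff]
  omega

theorem some_mem_edge_iff (x : Σ i, Fin (l i)) (i : Fin r) (j : Fin (l i - 1)) :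
    some ⟨i, j⟩ ∈ edge l x ↔ x.1 = i ∧ ((x.2 : ℕ) = j ∨ (x.2 : ℕ) = j + 1) := by
  simp only [edge, Sym2.mem_iff, eq_comm (a := some _), vertex_eq_some_iff]
  omega

theorem edge_injective (hl : ∀ i, 3 ≤ l i) : (edge l).Injective := by
  rintro ⟨i, t⟩ ⟨i', t'⟩ h
  have hmem : ∀ v, v ∈ edge l ⟨i, t⟩ ↔ v ∈ edge l ⟨i', t'⟩ := fun v => by rw [h]
  have := hl i
  have := t.2
  have := t'.2
  obtain rfl : i = i' := by
    have := (hmem (some ⟨i, ⟨t - 1, by omega⟩⟩)).1 ((some_mem_edge_iff _ _ _).2 ⟨rfl, by dsimp only; omega⟩)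
    exact ((some_mem_edge_iff _ _ _).1 this).1.symm
  have hsome := fun j => (hmem (some ⟨i, j⟩))
  simp only [some_mem_edge_iff, true_and] at hsome
  have h1 := hsome ⟨t - 1, by omega⟩
  have h2 := hsome ⟨t' - 1, by omega⟩
  have h3 := hmem none
  simp only [none_mem_edge_iff] at h1 h2 h3
  refine Fin.sigma_ext_iff.2 ⟨rfl, ?_⟩
  dsimp only at h1 h2 h3 ⊢
  omega

theorem edge_not_isDiag (hl : ∀ i, 3 ≤ l i) (x : Σ i, Fin (l i)) : ¬ (edge l x).IsDiag := by
  have := hl x.1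
  rw [edge, Sym2.mk_isDiag_iff]
  intro h
  rcases hv : vertex l x.1 x.2 with _ | ⟨i, j⟩ <;> rw [hv] at h
  · rw [vertex_eq_none_iff] at hv
    rw [eq_comm, vertex_eq_none_iff] at h
    omega
  · rw [vertex_eq_some_iff] at hv
    rw [eq_comm, vertex_eq_some_iff] at h
    omega

theorem range_edge (hl : ∀ i, 3 ≤ l i) : Set.range (edge l) = (cycleSpider r l).edgeSet := by
  ext e
  rw [cycleSpider, SimpleGraph.edgeSet_fromEdgeSet]
  constructor
  · rintro ⟨⟨i, t⟩, rfl⟩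
    refine ⟨?_, edge_not_isDiag hl _⟩
    have := hl i
    have := t.2
    by_cases ht0 : (t : ℕ) = 0
    · refine Or.inl ⟨i, ⟨0, by omega⟩, Or.inl rfl, ?_⟩
      simp only [edge, Sym2.eq_iff, vertex_eq_some_iff, vertex_eq_none_iff, true_and]
      omega
    by_cases ht : (t : ℕ) + 1 = l i
    · refine Or.inl ⟨i, ⟨l i - 2, by omega⟩, Or.inr rfl, ?_⟩
      simp only [edge, Sym2.eq_iff, vertex_eq_some_iff, vertex_eq_none_iff, true_and]
      omega
    · refine Or.inr ⟨i, ⟨t - 1, by omega⟩, ⟨t, by omega⟩, by dsimp only; omega, ?_⟩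
      simp only [edge, Sym2.eq_iff, vertex_eq_some_iff, true_and, and_true]
      omega
  · rintro ⟨⟨i, j, hj | hj, rfl⟩ | ⟨i, j, j', hj', rfl⟩, -⟩ <;> have := hl i <;> have := j.2
    · refine ⟨⟨i, ⟨0, by omega⟩⟩, ?_⟩
      simp only [edge, Sym2.eq_iff, vertex_eq_some_iff, vertex_eq_none_iff, true_and, true_or]
      omega
    · refine ⟨⟨i, ⟨l i - 1, by omega⟩⟩, ?_⟩
      simp only [edge, Sym2.eq_iff, vertex_eq_some_iff, vertex_eq_none_iff, true_and]
      omega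
    · refine ⟨⟨i, ⟨j + 1, by omega⟩⟩, ?_⟩
      simp only [edge, Sym2.eq_iff, vertex_eq_some_iff, true_and, and_true]
      omega

theorem filter_some_mem_edge (i : Fin r) (j : Fin (l i - 1)) :
    univ.filter (fun x => some ⟨i, j⟩ ∈ edge l x) =
      {⟨i, ⟨j, by have := j.2; omega⟩⟩, ⟨i, ⟨j + 1, by have := j.2; omega⟩⟩} := by
  ext x
  simp only [mem_filter, mem_univ, true_and, some_mem_edge_iff, mem_insert, mem_singleton,
    Fin.sigma_ext_iff, and_or_left]

theorem filter_none_mem_edge (hl : ∀ i, 3 ≤ l i) :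
    univ.filter (fun x => none ∈ edge l x) =
      univ.sigma fun i => {⟨0, by have := hl i; omega⟩, ⟨l i - 1, by have := hl i; omega⟩} := by
  ext x
  have := x.2.2
  simp only [mem_filter, mem_univ, true_and, none_mem_edge_iff, mem_sigma, mem_insert,
    mem_singleton, Fin.ext_iff]
  omega

theorem deg_some (hl : ∀ i, 3 ≤ l i) (i : Fin r) (j : Fin (l i - 1)) :
    deg (cycleSpider r l) (some ⟨i, j⟩) = 2 := by
  rw [deg_eq_card_filter (edge_injective hl) (range_edge hl), filter_some_mem_edge,
    card_pair (by simp)]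

theorem deg_none (hl : ∀ i, 3 ≤ l i) : deg (cycleSpider r l) none = 2 * r := by
  rw [deg_eq_card_filter (edge_injective hl) (range_edge hl), filter_none_mem_edge hl, card_sigma,
    sum_congr rfl fun i _ => card_pair (by have := hl i; simp [Fin.ext_iff]; omega)]
  simp [mul_comm]

def labeling {n : ℕ} (N : (Σ i, Fin (l i)) ≃ Fin n) : Sym2 (Option (Σ i, Fin (l i - 1))) → ℕ :=
  Function.extend (edge l) (fun x => (N x : ℕ) + 1) 0

variable {n : ℕ} {N : (Σ i, Fin (l i)) ≃ Fin n} {a : Fin r → ℕ}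

theorem phi_labeling_some (hl : ∀ i, 3 ≤ l i) (hN : ∀ x, (N x : ℕ) = a x.1 + x.2)
    (i : Fin r) (j : Fin (l i - 1)) :
    phi (cycleSpider r l) (labeling N) (some ⟨i, j⟩) = 2 * a i + 2 * j + 3 := by
  rw [labeling, phi_extend (edge_injective hl) (range_edge hl), filter_some_mem_edge,
    sum_pair (by simp), hN, hN]
  dsimp only
  ring

theorem phi_labeling_none (hl : ∀ i, 3 ≤ l i) (hN : ∀ x, (N x : ℕ) = a x.1 + x.2) :
    phi (cycleSpider r l) (labeling N) none = ∑ i, (2 * a i + l i + 1) := by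
  rw [labeling, phi_extend (edge_injective hl) (range_edge hl), filter_none_mem_edge hl, sum_sigma]
  refine sum_congr rfl fun i _ => ?_
  have := hl i
  rw [sum_pair (by simp [Fin.ext_iff]; omega), hN, hN]
  dsimp only
  omega

theorem phi_labeling_some_lt_none (hl : ∀ i, 3 ≤ l i) (hN : ∀ x, (N x : ℕ) = a x.1 + x.2)
    (hcenter : 2 * n ≤ ∑ i, (2 * a i + l i + 1)) (i : Fin r) (j : Fin (l i - 1)) :
    phi (cycleSpider r l) (labeling N) (some ⟨i, j⟩) < phi (cycleSpider r l) (labeling N) none := by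
  have hlast := hN ⟨i, ⟨j + 1, by have := j.2; omega⟩⟩
  have := (N ⟨i, ⟨j + 1, by have := j.2; omega⟩⟩).2
  rw [phi_labeling_some hl hN, phi_labeling_none hl hN]
  dsimp only at hlast
  omega

theorem phi_labeling_some_injective (hl : ∀ i, 3 ≤ l i) (hN : ∀ x, (N x : ℕ) = a x.1 + x.2) :
    Function.Injective fun v => phi (cycleSpider r l) (labeling N) (some v) := by
  rintro ⟨i, j⟩ ⟨i', j'⟩ h
  simp only [phi_labeling_some hl hN] at h
  have hNeq : N ⟨i, ⟨j, by have := j.2; omega⟩⟩ = N ⟨i', ⟨j', by have := j'.2; omega⟩⟩ :=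
    Fin.ext (by rw [hN, hN]; dsimp only; omega)
  have hx := N.injective hNeq
  have hi : i = i' := congrArg Sigma.fst hx
  have hj : (j : ℕ) = j' := congrArg (fun x : Σ i, Fin (l i) => (x.2 : ℕ)) hx
  exact Fin.sigma_ext_iff.2 ⟨hi, hj⟩

theorem isStronglyAntimagicLabeling_labeling (hl : ∀ i, 3 ≤ l i)
    (hN : ∀ x, (N x : ℕ) = a x.1 + x.2) (hcenter : 2 * n ≤ ∑ i, (2 * a i + l i + 1)) :
    IsStronglyAntimagicLabeling (cycleSpider r l) (labeling N) := by
  have hlt := phi_labeling_some_lt_none hl hN hcenter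
  refine ⟨?_, ?_, ?_⟩
  · rw [card_edges_eq (edge_injective hl) (range_edge hl), Fintype.card_congr N, Fintype.card_fin]
    exact bijOn_extend (edge_injective hl) (range_edge hl) N
  · rintro (_ | ⟨i, j⟩) (_ | ⟨i', j'⟩) huv
    · exact absurd rfl huv
    · exact (hlt i' j').ne'
    · exact (hlt i j).ne
    · exact fun h => huv (congrArg some (phi_labeling_some_injective hl hN h))
  · rintro (_ | ⟨i, j⟩) (_ | ⟨i', j'⟩) hdeg
    · exact absurd hdeg (lt_irrefl _)
    · exact hlt i' j'
    · rw [deg_none hl, deg_some hl] at hdeg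
      have := i.2
      omega
    · rw [deg_some hl, deg_some hl] at hdeg
      exact absurd hdeg (lt_irrefl _)

end cycleSpider

open cycleSpider in
/-- every cycle spider (at least three cycles, each of length at least 3,
pairwise meeting exactly in the common center) is strongly antimagic. -/
theorem stmt_17 (r : ℕ) (hr : 3 ≤ r) (l : Fin r → ℕ) (hl : ∀ i : Fin r, 3 ≤ l i) :
    IsStronglyAntimagic (cycleSpider r l) := by
  obtain ⟨a, N, hN, hcenter⟩ := exists_blockEnumeration (by omega) l
  exact ⟨labeling N, isStronglyAntimagicLabeling_labeling hl hN hcenter⟩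
end
end
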